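/- Let K be a field of characteristic 2, let n ≥ 1, let a_0, a_1, …, a_n ∈ ℤ, and let D_0, D_1, …, D_n be K-linear derivations of LaurentPolynomial K with D_k t = t^{a_k + 1} for each k. Then the left-normed bracket ⁅D_0, D_1, …, D_n⁆ is nonzero if and only if exactly one of a_0, a_1 is odd and a_k is even for every 2 ≤ k ≤ n. -/

import Mathlib

open LaurentPolynomial

variable (K : Type*) [Field K]

/-- The left-normed bracket `⁅D 0, D 1, …, D n⁆` of derivations. -/
noncomputable def lnDer {A : Type*} [CommRing A] [Algebra K A]
    (D : ℕ → Derivation K A A) : ℕ → Derivation K A A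
  | 0 => D 0
  | n + 1 => ⁅lnDer D n, D (n + 1)⁆

/-!
A derivation of `K[T;T⁻¹]` is determined by its value on `T`. If `D (T) = c T^{a+1}` and
`E (T) = d T^{b+1}`, then `⁅D, E⁆ (T) = (b - a) c d T^{a+b+1}`, so inductively
`⁅D_0, …, D_n⁆ (T) = c_n T^{a_0 + ⋯ + a_n + 1}` with the integer
`c_n = ∏_{m < n} (a_{m+1} - (a_0 + ⋯ + a_m))`. In characteristic two the bracket is therefore
nonzero iff `c_n` is odd. The first factor `a_1 - a_0` is odd iff exactly one of `a_0, a_1` is;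
once it is, `a_0 + a_1` is odd, and then each further factor is odd iff the new `a_{m+1}` is even,
which keeps the partial sums odd.
-/

open Finset

namespace LaurentPolynomial

variable {R M : Type*} [CommRing R] [AddCommGroup M] [Module R[T;T⁻¹] M] [Module R M]

theorem derivation_apply_T (D : Derivation R R[T;T⁻¹] M) (m : ℤ) :
    D (T m) = m • (T (m - 1) : R[T;T⁻¹]) • D (T 1) := by
  have hnat (n : ℕ) : D (T n) = (n : ℤ) • (T (n - 1) : R[T;T⁻¹]) • D (T 1) := by
    rcases n with _ | n
    · simp [T_zero]
    · rw [← mul_one ((n + 1 : ℕ) : ℤ), ← T_pow, D.leibniz_pow, T_pow, ← natCast_zsmul]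
      simp
  obtain ⟨n, rfl | rfl⟩ := m.eq_nat_or_neg
  · exact hnat n
  · have hT : (-T (-n) ^ 2 * T (n - 1) : R[T;T⁻¹]) = -T (-n - 1) := by
      rw [T_pow, neg_mul, ← T_add]; ring_nf
    rw [← invOf_T, D.leibniz_invOf, invOf_T, hnat, smul_comm,
      smul_smul, hT, neg_smul, smul_neg, neg_smul]

theorem derivation_ext {D E : Derivation R R[T;T⁻¹] M} (h : D (T 1) = E (T 1)) : D = E := by
  ext f
  induction f using LaurentPolynomial.induction_on' with
  | add p q hp hq => rw [map_add, map_add, hp, hq]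
  | C_mul_T n r => rw [← smul_eq_C_mul, D.map_smul, E.map_smul, derivation_apply_T D n,
      derivation_apply_T E n, h]

theorem derivation_eq_zero_iff {D : Derivation R R[T;T⁻¹] M} : D = 0 ↔ D (T 1) = 0 :=
  ⟨fun h => h ▸ rfl, fun h => derivation_ext (h.trans (Derivation.zero_apply _).symm)⟩

theorem commutator_apply_T_one {D E : Derivation R R[T;T⁻¹] R[T;T⁻¹]} {a b c d : ℤ}
    (hD : D (T 1) = c • T (a + 1)) (hE : E (T 1) = d • T (b + 1)) :
    ⁅D, E⁆ (T 1) = ((b - a) * c * d) • T (a + b + 1) := by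
  rw [Derivation.commutator_apply, hD, hE, map_zsmul, map_zsmul, derivation_apply_T D,
    derivation_apply_T E, hD, hE]
  simp only [add_sub_cancel_right, zsmul_eq_mul, smul_eq_mul]
  have hab : (T b * T (a + 1) : R[T;T⁻¹]) = T (a + b + 1) := by rw [← T_add]; ring_nf
  have hba : (T a * T (b + 1) : R[T;T⁻¹]) = T (a + b + 1) := by rw [← T_add]; ring_nf
  push_cast
  linear_combination (d * (b + 1) * c : R[T;T⁻¹]) * hab - (c * (a + 1) * d : R[T;T⁻¹]) * hba

theorem zsmul_T_eq_zero_iff (c m : ℤ) : (c • T m : R[T;T⁻¹]) = 0 ↔ (c : R) = 0 := by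
  rw [← Int.cast_smul_eq_zsmul R, T, AddMonoidAlgebra.smul_single, smul_eq_mul, mul_one,
    AddMonoidAlgebra.single_eq_zero]

end LaurentPolynomial

def lnCoeff (a : ℕ → ℤ) (n : ℕ) : ℤ :=
  ∏ m ∈ range n, (a (m + 1) - ∑ k ∈ range (m + 1), a k)

section Bracket

variable {K}

theorem lnDer_apply_T_one (a : ℕ → ℤ)
    (D : ℕ → Derivation K K[T;T⁻¹] K[T;T⁻¹]) (n : ℕ) (hD : ∀ k ≤ n, D k (T 1) = T (a k + 1)) :
    lnDer K D n (T 1) = lnCoeff a n • T (∑ k ∈ range (n + 1), a k + 1) := by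
  induction n with
  | zero => simpa [lnDer, lnCoeff] using hD 0 le_rfl
  | succ n ih =>
    have hnext : D (n + 1) (T 1) = (1 : ℤ) • T (a (n + 1) + 1) := by
      rw [one_smul, hD (n + 1) le_rfl]
    rw [lnDer, commutator_apply_T_one (ih fun k hk => hD k (hk.trans n.le_succ)) hnext,
      lnCoeff, lnCoeff, prod_range_succ, sum_range_succ _ (n + 1), mul_one, mul_comm]

end Bracket

section Parity

variable {a : ℕ → ℤ} {n : ℕ}

theorem odd_sum_range_of_xor (hn : 1 ≤ n) (h01 : Xor (Odd (a 0)) (Odd (a 1)))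
    (heven : ∀ k, 2 ≤ k → k ≤ n → Even (a k)) : Odd (∑ k ∈ range (n + 1), a k) := by
  induction n, hn using Nat.le_induction with
  | base =>
    rw [sum_range_succ, sum_range_one, Int.odd_add, ← Int.not_odd_iff_even, ← xor_iff_iff_not]
    exact h01
  | succ n hn ih =>
    rw [sum_range_succ]
    exact (ih fun k hk2 hk => heven k hk2 (hk.trans n.le_succ)).add_even
      (heven (n + 1) (by omega) le_rfl)

theorem odd_lnCoeff_iff (hn : 1 ≤ n) :
    Odd (lnCoeff a n) ↔ Xor (Odd (a 0)) (Odd (a 1)) ∧ ∀ k, 2 ≤ k → k ≤ n → Even (a k) := by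
  induction n, hn using Nat.le_induction with
  | base =>
    simp only [lnCoeff, prod_range_one, zero_add, sum_range_one, Int.odd_sub,
      ← Int.not_odd_iff_even, ← xor_iff_iff_not]
    exact ⟨fun h => ⟨h.symm, fun k hk2 hk => absurd (hk2.trans hk) (by norm_num)⟩,
      fun h => h.1.symm⟩
  | succ n hn ih =>
    rw [lnCoeff, prod_range_succ, Int.odd_mul, ← lnCoeff, ih]
    constructor
    · rintro ⟨⟨h01, heven⟩, hodd⟩
      refine ⟨h01, fun k hk2 hk => ?_⟩
      rcases hk.lt_or_eq with hk | rfl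
      · exact heven k hk2 (Nat.lt_succ_iff.mp hk)
      · exact (Int.odd_sub'.mp hodd).mp (odd_sum_range_of_xor hn h01 heven)
    · rintro ⟨h01, heven⟩
      have heven' : ∀ k, 2 ≤ k → k ≤ n → Even (a k) := fun k hk2 hk =>
        heven k hk2 (hk.trans n.le_succ)
      exact ⟨⟨h01, heven'⟩, Int.odd_sub'.mpr (iff_of_true (odd_sum_range_of_xor hn h01 heven')
        (heven (n + 1) (by omega) le_rfl))⟩

end Parity

/-- In characteristic two, the left-normed bracket `⁅e_{a_0}, …, e_{a_n}⁆` in `U_1` is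
nonzero iff exactly one of `a_0, a_1` is odd and all `a_k`, `2 ≤ k ≤ n`, are even. -/
theorem lnDer_ne_zero_iff [CharP K 2] (n : ℕ) (hn : 1 ≤ n) (a : ℕ → ℤ)
    (D : ℕ → Derivation K (LaurentPolynomial K) (LaurentPolynomial K))
    (hD : ∀ k ≤ n, (D k) (T 1) = T (a k + 1)) :
    lnDer K D n ≠ 0 ↔
      (Xor' (Odd (a 0)) (Odd (a 1)) ∧ ∀ k : ℕ, 2 ≤ k → k ≤ n → Even (a k)) := by
  rw [Ne, derivation_eq_zero_iff, lnDer_apply_T_one a D n hD, zsmul_T_eq_zero_iff,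
    CharP.intCast_eq_zero_iff K 2, Nat.cast_ofNat, ← even_iff_two_dvd, Int.not_even_iff_odd]
  exact odd_lnCoeff_iff hn
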